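/- If ν ∈ H₁⁺(κ), then the function ν̃ defined on ⊔ₙ 𝔷̃ₙ by ν̃(z,γ) := (dim(z)/κ-dim(z))·ν(z)·γ^{−1} belongs to H₁⁺(μ̃)_{−1}. -/
import Mathlib


open scoped BigOperators Classical ENNReal

universe u

variable {Z : ℕ → Type u}

/-- A path in the branching graph ending at the vertex `z` of level `n`:
it records vertices `z₀,…,zₙ` with `zₙ = z` and `κ(z_{k+1}, z_k) > 0` for all `k`.
(At level `0` the vertex is forced since `Z 0` is a singleton.) -/
structure BPath (κ : ∀ n, Z (n + 1) → Z n → ℝ) {n : ℕ} (z : Z n) where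
  pt : ∀ k : Fin (n + 1), Z k
  last : pt (Fin.last n) = z
  pos : ∀ k : Fin n, 0 < κ k (pt k.succ) (pt k.castSucc)

/-- `dim z`: the number of paths to `z`. -/
noncomputable def bdim (κ : ∀ n, Z (n + 1) → Z n → ℝ) {n : ℕ} (z : Z n) : ℕ :=
  Nat.card (BPath κ z)

/-- The `κ`-dimension `κ-dim(z)`. -/
noncomputable def kdim (κ : ∀ n, Z (n + 1) → Z n → ℝ) {n : ℕ} (z : Z n) : ℝ :=
  Real.sqrt (∑' p : BPath κ z, ∏ k : Fin n, (κ k (p.pt k.succ) (p.pt k.castSucc))⁻¹)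

/-- The weight `ρ(z, z')`. -/
noncomputable def wrho (κ : ∀ n, Z (n + 1) → Z n → ℝ) {n : ℕ} (z : Z (n + 1)) (z' : Z n) : ℝ :=
  kdim κ z * κ n z z' / kdim κ z'

/-- The weight group `Γ(κ)`: the subgroup of `ℝˣ` generated by the positive weights. -/
noncomputable def weightGroup (κ : ∀ n, Z (n + 1) → Z n → ℝ) : Subgroup ℝˣ :=
  Subgroup.closure
    {γ : ℝˣ | ∃ (n : ℕ) (z : Z (n + 1)) (z' : Z n), 0 < κ n z z' ∧ (γ : ℝ) = wrho κ z z'}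

/-- The multiplicity function `m̃` of the weight-extended branching graph. -/
noncomputable def mtilde (κ : ∀ n, Z (n + 1) → Z n → ℝ) {n : ℕ}
    (p : Z (n + 1) × ℝˣ) (p' : Z n × ℝˣ) : ℕ :=
  if 0 < κ n p.1 p'.1 ∧ ((p.2⁻¹ * p'.2 : ℝˣ) : ℝ) = wrho κ p.1 p'.1 then 1 else 0

/-- The standard link `μ̃` of the weight-extended branching graph. -/
noncomputable def mutilde (κ : ∀ n, Z (n + 1) → Z n → ℝ) {n : ℕ}
    (p : Z (n + 1) × ℝˣ) (p' : Z n × ℝˣ) : ℝ :=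
  (mtilde κ p p' : ℝ) * (bdim κ p'.1 : ℝ) / (bdim κ p.1 : ℝ)

/-- `ν ∈ H₁⁺(κ)`: nonnegative, normalized at the root, and `κ`-harmonic
(the defining sums converging). -/
def memH1 (κ : ∀ n, Z (n + 1) → Z n → ℝ) [Unique (Z 0)] (ν : ∀ n, Z n → ℝ) : Prop :=
  (∀ (n : ℕ) (z : Z n), 0 ≤ ν n z) ∧ ν 0 default = 1 ∧
    ∀ (n : ℕ) (z' : Z n), HasSum (fun z : Z (n + 1) => ν (n + 1) z * κ n z z') (ν n z')

/-- `ν̃ ∈ H₁⁺(μ̃)_{−1}`: a nonnegative, normalized, `(−1)`-power scaling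
`μ̃`-harmonic function on the weight-extended branching graph. -/
def memH1T (κ : ∀ n, Z (n + 1) → Z n → ℝ) [Unique (Z 0)]
    (νt : ∀ n, Z n → ↥(weightGroup κ) → ℝ) : Prop :=
  (∀ (n : ℕ) (z : Z n) (γ : ↥(weightGroup κ)), 0 ≤ νt n z γ) ∧
  (∀ (n : ℕ) (z' : Z n) (γ' : ↥(weightGroup κ)),
      HasSum
        (fun p : Z (n + 1) × ↥(weightGroup κ) =>
          νt (n + 1) p.1 p.2 * mutilde κ (p.1, (p.2 : ℝˣ)) (z', (γ' : ℝˣ)))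
        (νt n z' γ')) ∧
  (∀ (n : ℕ) (z : Z n) (γ : ↥(weightGroup κ)), νt n z γ = (((γ : ℝˣ) : ℝ))⁻¹ * νt n z 1) ∧
  νt 0 default 1 = 1


section Aux

lemma BPath.ext' {κ : ∀ n, Z (n + 1) → Z n → ℝ} {n : ℕ} {z : Z n}
    {p q : BPath κ z} (h : p.pt = q.pt) : p = q := by
  cases p; cases q; simp_all

def BPath.extend {κ : ∀ n, Z (n + 1) → Z n → ℝ} {n : ℕ} {z' : Z n}
    (p : BPath κ z') (z : Z (n + 1)) (h : 0 < κ n z z') : BPath κ z where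
  pt := Fin.snoc (α := fun k : Fin (n+2) => Z ↑k) p.pt z
  last := by simp
  pos := by
    intro k
    refine Fin.lastCases ?_ ?_ k
    · show 0 < κ n (Fin.snoc (α := fun k : Fin (n+2) => Z ↑k) p.pt z (Fin.last (n+1)))
        (Fin.snoc (α := fun k : Fin (n+2) => Z ↑k) p.pt z (Fin.last n).castSucc)
      rw [Fin.snoc_last, Fin.snoc_castSucc, p.last]; exact h
    · intro j
      show 0 < κ j (Fin.snoc (α := fun k : Fin (n+2) => Z ↑k) p.pt z (j.succ).castSucc)
        (Fin.snoc (α := fun k : Fin (n+2) => Z ↑k) p.pt z (j.castSucc).castSucc)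
      rw [Fin.snoc_castSucc, Fin.snoc_castSucc]; exact p.pos j

def BPath.init {κ : ∀ n, Z (n + 1) → Z n → ℝ} {n : ℕ} {z : Z (n + 1)}
    (p : BPath κ z) : BPath κ (p.pt (Fin.last n).castSucc) where
  pt := fun k => p.pt k.castSucc
  last := rfl
  pos := fun k => p.pos k.castSucc

lemma BPath.pos_last {κ : ∀ n, Z (n + 1) → Z n → ℝ} {n : ℕ} {z : Z (n + 1)}
    (p : BPath κ z) : 0 < κ n z (p.pt (Fin.last n).castSucc) := by
  have h : 0 < κ n (p.pt (Fin.last (n+1))) (p.pt (Fin.last n).castSucc) := p.pos (Fin.last n)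
  rw [p.last] at h
  exact h

lemma bpath_finite {κ : ∀ n, Z (n + 1) → Z n → ℝ} [Unique (Z 0)]
    (hfin : ∀ (n : ℕ) (z : Z (n + 1)), {z' : Z n | 0 < κ n z z'}.Finite) :
    ∀ (n : ℕ) (z : Z n), Finite (BPath κ z) := by
  intro n
  induction n with
  | zero =>
    intro z
    haveI : ∀ k : Fin (0+1), Finite (Z ↑k) := by
      intro k
      have hk : (0:ℕ) = (k:ℕ) := by omega
      exact hk ▸ inferInstanceAs (Finite (Z 0))
    exact Finite.of_injective (fun p : BPath κ z => p.pt) (fun p q h => BPath.ext' h)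
  | succ n ih =>
    intro z
    haveI := (hfin n z).to_subtype
    haveI : ∀ z' : {z' : Z n | 0 < κ n z z'}, Finite (BPath κ (z' : Z n)) := fun z' => ih _
    refine Finite.of_injective
      (fun p : BPath κ z =>
        (⟨⟨p.pt (Fin.last n).castSucc, p.pos_last⟩, p.init⟩ :
          Σ z' : {z' : Z n | 0 < κ n z z'}, BPath κ (z' : Z n))) ?_
    intro p q h
    apply BPath.ext'
    have h2 : (fun k : Fin (n+1) => p.pt k.castSucc) = (fun k : Fin (n+1) => q.pt k.castSucc) :=
      congrArg (fun x : (Σ z' : {z' : Z n | 0 < κ n z z'}, BPath κ (z' : Z n)) => x.2.pt) h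
    funext k
    refine Fin.lastCases ?_ ?_ k
    · rw [p.last, q.last]
    · intro j; exact congrFun h2 j

def BPath.root {κ : ∀ n, Z (n + 1) → Z n → ℝ} (z : Z 0) : BPath κ z where
  pt := fun k => Fin.cases (motive := fun k : Fin 1 => Z ↑k) z (fun i => i.elim0) k
  last := rfl
  pos := fun k => k.elim0

lemma bpath_nonempty {κ : ∀ n, Z (n + 1) → Z n → ℝ}
    (hκ0 : ∀ (n : ℕ) (z : Z (n + 1)) (z' : Z n), 0 ≤ κ n z z')
    (hrow : ∀ (n : ℕ) (z : Z (n + 1)), HasSum (fun z' : Z n => κ n z z') 1) :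
    ∀ (n : ℕ) (z : Z n), Nonempty (BPath κ z) := by
  intro n
  induction n with
  | zero => intro z; exact ⟨BPath.root z⟩
  | succ n ih =>
    intro z
    have : ∃ z' : Z n, 0 < κ n z z' := by
      by_contra hc
      push_neg at hc
      have hz : ∀ z' : Z n, κ n z z' = 0 := fun z' => le_antisymm (hc z') (hκ0 n z z')
      have : HasSum (fun z' : Z n => κ n z z') 0 := by
        simpa [hz] using hasSum_zero (α := ℝ) (β := Z n)
      exact one_ne_zero ((hrow n z).unique this)
    obtain ⟨z', hz'⟩ := this
    obtain ⟨p⟩ := ih z'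
    exact ⟨p.extend z hz'⟩

lemma bpath_subsingleton_root {κ : ∀ n, Z (n + 1) → Z n → ℝ} (z : Z 0) :
    Subsingleton (BPath κ z) := by
  constructor
  intro p q
  apply BPath.ext'
  funext k
  have hk : k = Fin.last 0 := by omega
  subst hk
  rw [p.last, q.last]

lemma bdim_root {κ : ∀ n, Z (n + 1) → Z n → ℝ} (z : Z 0) : bdim κ z = 1 := by
  haveI := bpath_subsingleton_root (κ := κ) z
  haveI : Nonempty (BPath κ z) := ⟨BPath.root z⟩
  haveI : Unique (BPath κ z) := uniqueOfSubsingleton (Classical.choice ‹Nonempty (BPath κ z)›)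
  exact Nat.card_unique

lemma kdim_root {κ : ∀ n, Z (n + 1) → Z n → ℝ} (z : Z 0) : kdim κ z = 1 := by
  haveI := bpath_subsingleton_root (κ := κ) z
  haveI : Nonempty (BPath κ z) := ⟨BPath.root z⟩
  haveI : Unique (BPath κ z) := uniqueOfSubsingleton (Classical.choice ‹Nonempty (BPath κ z)›)
  unfold kdim
  rw [tsum_eq_single default (fun b hb => absurd (Subsingleton.elim b default) hb)]
  simp

lemma one_le_kdim {κ : ∀ n, Z (n + 1) → Z n → ℝ}
    (hκ01 : ∀ (n : ℕ) (z : Z (n + 1)) (z' : Z n), κ n z z' ∈ Set.Icc (0 : ℝ) 1)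
    {n : ℕ} (z : Z n) [Finite (BPath κ z)] [Nonempty (BPath κ z)] :
    1 ≤ kdim κ z := by
  haveI : Fintype (BPath κ z) := Fintype.ofFinite _
  have hterm : ∀ p : BPath κ z,
      1 ≤ ∏ k : Fin n, (κ k (p.pt k.succ) (p.pt k.castSucc))⁻¹ := by
    intro p
    have : ∏ _k : Fin n, (1:ℝ) ≤ ∏ k : Fin n, (κ k (p.pt k.succ) (p.pt k.castSucc))⁻¹ := by
      refine Finset.prod_le_prod (fun k _ => zero_le_one) (fun k _ => ?_)
      have h1 := (hκ01 k (p.pt k.succ) (p.pt k.castSucc)).2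
      have h0 := p.pos k
      rw [le_inv_comm₀ one_pos h0]
      simpa using h1
    simpa using this
  obtain ⟨p⟩ := ‹Nonempty (BPath κ z)›
  have hsum : 1 ≤ ∑' q : BPath κ z, ∏ k : Fin n, (κ k (q.pt k.succ) (q.pt k.castSucc))⁻¹ := by
    rw [tsum_fintype]
    calc (1:ℝ) ≤ ∏ k : Fin n, (κ k (p.pt k.succ) (p.pt k.castSucc))⁻¹ := hterm p
    _ ≤ _ := Finset.single_le_sum (fun q _ => le_trans zero_le_one (hterm q))
          (Finset.mem_univ p)
  calc (1:ℝ) = Real.sqrt 1 := by simp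
  _ ≤ _ := Real.sqrt_le_sqrt hsum

lemma kdim_pos {κ : ∀ n, Z (n + 1) → Z n → ℝ}
    (hκ01 : ∀ (n : ℕ) (z : Z (n + 1)) (z' : Z n), κ n z z' ∈ Set.Icc (0 : ℝ) 1)
    {n : ℕ} (z : Z n) [Finite (BPath κ z)] [Nonempty (BPath κ z)] :
    0 < kdim κ z := lt_of_lt_of_le one_pos (one_le_kdim hκ01 z)

lemma kdim_nonneg {κ : ∀ n, Z (n + 1) → Z n → ℝ} {n : ℕ} (z : Z n) : 0 ≤ kdim κ z :=
  Real.sqrt_nonneg _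

lemma bdim_pos {κ : ∀ n, Z (n + 1) → Z n → ℝ} {n : ℕ} (z : Z n)
    [Finite (BPath κ z)] [Nonempty (BPath κ z)] : 0 < bdim κ z :=
  Nat.card_pos

lemma mem_weightGroup_pos {κ : ∀ n, Z (n + 1) → Z n → ℝ}
    (hκ01 : ∀ (n : ℕ) (z : Z (n + 1)) (z' : Z n), κ n z z' ∈ Set.Icc (0 : ℝ) 1)
    {γ : ℝˣ} (h : γ ∈ weightGroup κ) : 0 < (γ : ℝ) := by
  refine Subgroup.closure_induction ?_ ?_ ?_ ?_ h
  · rintro x ⟨n, z, z', hpos, hx⟩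
    have hnn : 0 ≤ wrho κ z z' :=
      div_nonneg (mul_nonneg (kdim_nonneg z) (hκ01 n z z').1) (kdim_nonneg z')
    rcases lt_or_eq_of_le hnn with h' | h'
    · rwa [hx]
    · exact absurd (hx.trans h'.symm) x.ne_zero
  · exact one_pos
  · intro x y _ _ hx hy; rw [Units.val_mul]; exact mul_pos hx hy
  · intro x _ hx; rw [Units.val_inv_eq_inv_val]; exact inv_pos.2 hx

end Aux

theorem stmt8     [∀ n, Countable (Z n)] [Unique (Z 0)]
    (κ : ∀ n, Z (n + 1) → Z n → ℝ)
    (hκ01 : ∀ (n : ℕ) (z : Z (n + 1)) (z' : Z n), κ n z z' ∈ Set.Icc (0 : ℝ) 1)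
    (hrow : ∀ (n : ℕ) (z : Z (n + 1)), HasSum (fun z' : Z n => κ n z z') 1)
    (hsupp : ∀ (n : ℕ) (z' : Z n), ∃ z : Z (n + 1), 0 < κ n z z')
    (hfin : ∀ (n : ℕ) (z : Z (n + 1)), {z' : Z n | 0 < κ n z z'}.Finite)
    (ν : ∀ n, Z n → ℝ) (hν : memH1 κ ν) :
    memH1T κ (fun n z γ => (bdim κ z : ℝ) / kdim κ z * ν n z * (((γ : ℝˣ) : ℝ))⁻¹) := by
  obtain ⟨hν0, hν1, hνh⟩ := hν
  haveI hFin : ∀ (n : ℕ) (z : Z n), Finite (BPath κ z) := bpath_finite hfin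
  haveI hNe : ∀ (n : ℕ) (z : Z n), Nonempty (BPath κ z) :=
    bpath_nonempty (fun n z z' => (hκ01 n z z').1) hrow
  refine ⟨?_, ?_, ?_, ?_⟩
  · intro n z γ
    have hγ := mem_weightGroup_pos hκ01 γ.2
    exact mul_nonneg (mul_nonneg (div_nonneg (Nat.cast_nonneg _) (kdim_nonneg z)) (hν0 n z))
      (inv_nonneg.2 hγ.le)
  · intro n z' γ'
    haveI := hFin (n+1)
    haveI := hNe (n+1)
    haveI := hFin n z'
    haveI := hNe n z'
    set c : ℝ := (bdim κ z' : ℝ) / kdim κ z' * (((γ' : ℝˣ) : ℝ))⁻¹ with hc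
    have hρ : ∀ z : Z (n+1), 0 < κ n z z' → wrho κ z z' ≠ 0 := by
      intro z h
      have : 0 < wrho κ z z' :=
        div_pos (mul_pos (kdim_pos hκ01 z) h) (kdim_pos hκ01 z')
      exact this.ne'
    let u : ∀ z : Z (n+1), 0 < κ n z z' → ℝˣ := fun z h => Units.mk0 (wrho κ z z') (hρ z h)
    have hu_mem : ∀ (z : Z (n+1)) (h : 0 < κ n z z'), u z h ∈ weightGroup κ :=
      fun z h => Subgroup.subset_closure ⟨n, z, z', h, rfl⟩
    let g : Z (n+1) → ↥(weightGroup κ) := fun z =>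
      if h : 0 < κ n z z' then
        ⟨(γ' : ℝˣ) * (u z h)⁻¹, mul_mem γ'.2 (inv_mem (hu_mem z h))⟩
      else γ'
    let i : Z (n+1) → Z (n+1) × ↥(weightGroup κ) := fun z => (z, g z)
    have hinj : Function.Injective i := fun a b hab => congrArg Prod.fst hab
    have hzero : ∀ p : Z (n+1) × ↥(weightGroup κ), p ∉ Set.range i →
        ((bdim κ p.1 : ℝ) / kdim κ p.1 * ν (n+1) p.1 * (((p.2 : ℝˣ) : ℝ))⁻¹) *
          mutilde κ (p.1, (p.2 : ℝˣ)) (z', (γ' : ℝˣ)) = 0 := by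
      rintro ⟨z, γ⟩ hp
      have hγg : γ ≠ g z := by
        intro hcontra
        exact hp ⟨z, by simp [i, hcontra]⟩
      have hm : mtilde κ (z, (γ : ℝˣ)) (z', (γ' : ℝˣ)) = 0 := by
        rw [mtilde, if_neg]
        rintro ⟨h1, h2⟩
        apply hγg
        have hval : ((γ : ℝˣ)⁻¹ * (γ' : ℝˣ)) = u z h1 := by
          apply Units.ext
          rw [h2]
          simp [u]
        have : (γ : ℝˣ) = (γ' : ℝˣ) * (u z h1)⁻¹ := by
          rw [← hval]; group
        apply Subtype.ext
        rw [this]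
        simp [g, dif_pos h1]
      rw [mutilde, hm]
      simp
    rw [← Function.Injective.hasSum_iff hinj hzero]
    have H := (hνh n z').mul_left c
    have hval : c * ν n z' = (bdim κ z' : ℝ) / kdim κ z' * ν n z' * (((γ' : ℝˣ) : ℝ))⁻¹ := by
      rw [hc]; ring
    rw [hval] at H
    refine H.congr_fun ?_
    intro z
    show ((bdim κ z : ℝ) / kdim κ z * ν (n+1) z * (((g z : ℝˣ) : ℝ))⁻¹) *
        mutilde κ (z, (g z : ℝˣ)) (z', (γ' : ℝˣ)) = c * (ν (n+1) z * κ n z z')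
    by_cases h : 0 < κ n z z'
    · have hg : (g z : ℝˣ) = (γ' : ℝˣ) * (u z h)⁻¹ := by simp [g, dif_pos h]
      have hm : mtilde κ (z, (g z : ℝˣ)) (z', (γ' : ℝˣ)) = 1 := by
        rw [mtilde, if_pos]
        refine ⟨h, ?_⟩
        rw [hg]
        have : ((γ' : ℝˣ) * (u z h)⁻¹)⁻¹ * (γ' : ℝˣ) = u z h := by group
        rw [this]
        simp [u]
      have hkz := (kdim_pos hκ01 z).ne'
      have hkz' := (kdim_pos hκ01 z').ne'
      have hbz := Nat.cast_ne_zero (R := ℝ) |>.2 (bdim_pos (κ := κ) z).ne'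
      have hγ' := (mem_weightGroup_pos hκ01 γ'.2).ne'
      rw [mutilde, hm, hg, hc]
      simp only [Units.val_mul, Units.val_inv_eq_inv_val, Units.val_mk0, u]
      rw [wrho]
      field_simp
      ring
    · have hm : mtilde κ (z, (g z : ℝˣ)) (z', (γ' : ℝˣ)) = 0 := by
        rw [mtilde, if_neg]
        rintro ⟨h1, _⟩
        exact h h1
      have hκz : κ n z z' = 0 := le_antisymm (not_lt.1 h) (hκ01 n z z').1
      rw [mutilde, hm, hκz]
      simp
  · intro n z γ
    simp only [OneMemClass.coe_one, Units.val_one, inv_one, mul_one]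
    ring
  · show (bdim κ (default : Z 0) : ℝ) / kdim κ (default : Z 0) * ν 0 default *
        ((((1 : ↥(weightGroup κ)) : ℝˣ) : ℝ))⁻¹ = 1
    rw [bdim_root, kdim_root, hν1]
    simp
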